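/- Let m, v, u be natural numbers with v < u and u ≤ m, and let h : ℕ → ℝ be any function. Then Σ over all ordered pairs (i, i') of binary patterns on Fin m with Hamming weight |i| = v and |i'| = u of h(d(i, i')) equals Σ_{t=u}^{v+u} C(m, t) · C(t, u) · C(u, (v+u) − t) · h(2t − (v+u)), where C denotes the binomial coefficient and d the Hamming distance. -/

import Mathlib

/-- Hamming weight of a binary pattern: the number of positions with value true. -/
def patWeight {α : Type*} [Fintype α] (i : α → Bool) : ℕ :=
  (Finset.univ.filter fun x => i x = true).card

/-!
Identify a pattern with its support. Fix the support `T` of `i'`, with `|T| = u`, and sort the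
supports `S` of weight `v` by `t = |S ∪ T|`. Such an `S` is determined by `S ∩ T`, of size
`v + u - t`, and `S \ T`, of size `t - u`, so there are `C(u, v+u-t) * C(m-u, t-u)` of them, each
at Hamming distance `|S ∆ T| = 2t - (v+u)` from `T`. Summing over the `C(m, u)` choices of `T`
and using `C(m, u) * C(m-u, t-u) = C(m, t) * C(t, u)` gives the formula.
-/

open Finset
open scoped symmDiff

section
variable {α : Type*} [DecidableEq α]

theorem card_symmDiff_add_two_mul_card_inter (S T : Finset α) :
    #(S ∆ T) + 2 * #(S ∩ T) = #S + #T := by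
  rw [symmDiff_eq_sup_sdiff_inf, sup_eq_union, inf_eq_inter,
    card_sdiff_of_subset inter_subset_union]
  have := card_union_add_card_inter S T
  have := card_le_card (inter_subset_union (s := S) (t := T))
  omega

theorem union_inter_eq_of_subset_of_disjoint {A B T : Finset α} (hA : A ⊆ T)
    (hB : Disjoint B T) : (A ∪ B) ∩ T = A := by
  rw [union_inter_distrib_right, inter_eq_left.2 hA, disjoint_iff_inter_eq_empty.1 hB,
    union_empty]

theorem union_sdiff_eq_of_subset_of_disjoint {A B T : Finset α} (hA : A ⊆ T)
    (hB : Disjoint B T) : (A ∪ B) \ T = B := by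
  rw [union_sdiff_distrib, sdiff_eq_empty_iff_subset.2 hA, empty_union, hB.sdiff_eq_left]

variable [Fintype α]

theorem card_filter_card_inter_card_sdiff (T : Finset α) (a b : ℕ) :
    #{S | #(S ∩ T) = a ∧ #(S \ T) = b} = (#T).choose a * (#Tᶜ).choose b := by
  rw [← card_powersetCard, ← card_powersetCard, ← card_product]
  refine card_nbij' (fun S => (S ∩ T, S \ T)) (fun P => P.1 ∪ P.2) ?_ ?_ ?_ ?_
  · intro S hS
    simpa using hS
  · rintro ⟨A, B⟩ hP
    simp only [coe_product, Set.mem_prod, mem_coe, mem_powersetCard,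
      subset_compl_iff_disjoint_right] at hP
    obtain ⟨⟨hAT, rfl⟩, hBT, rfl⟩ := hP
    simp [union_inter_eq_of_subset_of_disjoint hAT hBT,
      union_sdiff_eq_of_subset_of_disjoint hAT hBT]
  · intro S _
    exact sup_inf_sdiff S T
  · rintro ⟨A, B⟩ hP
    simp only [coe_product, Set.mem_prod, mem_coe, mem_powersetCard,
      subset_compl_iff_disjoint_right] at hP
    simp [union_inter_eq_of_subset_of_disjoint hP.1.1 hP.2.1,
      union_sdiff_eq_of_subset_of_disjoint hP.1.1 hP.2.1]

theorem sum_filter_card_eq_apply_card_symmDiff {M : Type*} [AddCommMonoid M] (T : Finset α)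
    (v : ℕ) (f : ℕ → M) :
    ∑ S with #S = v, f #(S ∆ T) =
      ∑ t ∈ Icc #T (v + #T),
        ((#T).choose (v + #T - t) * (#Tᶜ).choose (t - #T)) • f (2 * t - (v + #T)) := by
  have hmaps : ∀ S ∈ ({S | #S = v} : Finset (Finset α)), #(S ∪ T) ∈ Icc #T (v + #T) := by
    intro S hS
    rw [mem_filter] at hS
    rw [mem_Icc, ← hS.2]
    exact ⟨card_le_card subset_union_right, card_union_le S T⟩
  rw [← sum_fiberwise_of_maps_to hmaps]
  refine sum_congr rfl fun t ht => ?_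
  rw [mem_Icc] at ht
  have hfiber : ({S | #S = v} : Finset (Finset α)).filter (fun S => #(S ∪ T) = t) =
      ({S | #(S ∩ T) = v + #T - t ∧ #(S \ T) = t - #T} : Finset (Finset α)) := by
    ext S
    simp only [mem_filter, mem_univ, true_and]
    have := card_inter_add_card_sdiff S T
    have := card_sdiff_add_card S T
    omega
  have hdist : ∀ S ∈ ({S | #S = v} : Finset (Finset α)).filter (fun S => #(S ∪ T) = t),
      f #(S ∆ T) = f (2 * t - (v + #T)) := by
    intro S hS
    simp only [mem_filter, mem_univ, true_and] at hS
    have := card_symmDiff_add_two_mul_card_inter S T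
    have := card_union_add_card_inter S T
    congr 1
    omega
  rw [sum_congr rfl hdist, sum_const, hfiber, card_filter_card_inter_card_sdiff]

theorem sum_prod_filter_card_eq_apply_card_symmDiff {M : Type*} [AddCommMonoid M] (v u : ℕ)
    (f : ℕ → M) :
    ∑ q : Finset α × Finset α with #q.1 = v ∧ #q.2 = u, f #(q.1 ∆ q.2) =
      ∑ t ∈ Icc u (v + u), ((Fintype.card α).choose t * t.choose u * u.choose (v + u - t)) •
        f (2 * t - (v + u)) := by
  rw [← univ_product_univ, filter_product (fun S : Finset α => #S = v) (fun T => #T = u),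
    sum_product_right]
  have hinner : ∀ T ∈ ({T | #T = u} : Finset (Finset α)),
      ∑ S with #S = v, f #(S ∆ T) =
        ∑ t ∈ Icc u (v + u),
          (u.choose (v + u - t) * (Fintype.card α - u).choose (t - u)) • f (2 * t - (v + u)) := by
    intro T hT
    rw [mem_filter] at hT
    rw [sum_filter_card_eq_apply_card_symmDiff, card_compl, hT.2]
  rw [sum_congr rfl hinner, sum_const, univ_filter_card_eq, card_powersetCard, card_univ,
    smul_sum]
  refine sum_congr rfl fun t ht => ?_
  rw [smul_smul, Nat.choose_mul (mem_Icc.1 ht).1]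
  congr 1
  ring

variable (α) in
def boolFunEquivFinset : (α → Bool) ≃ Finset α where
  toFun i := {x | i x = true}
  invFun S x := x ∈ S
  left_inv i := by funext x; simp
  right_inv S := by ext x; simp

theorem card_boolFunEquivFinset (i : α → Bool) : #(boolFunEquivFinset α i) = patWeight i := rfl

theorem hammingDist_eq_card_symmDiff (i j : α → Bool) :
    hammingDist i j = #(boolFunEquivFinset α i ∆ boolFunEquivFinset α j) := by
  unfold hammingDist
  congr 1
  ext x
  simp only [boolFunEquivFinset, Equiv.coe_fn_mk, mem_symmDiff, mem_filter, mem_univ, true_and]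
  cases i x <;> cases j x <;> decide

theorem sum_filter_patWeight_eq_apply_hammingDist {M : Type*} [AddCommMonoid M] (v u : ℕ)
    (f : ℕ → M) :
    ∑ p : (α → Bool) × (α → Bool) with patWeight p.1 = v ∧ patWeight p.2 = u,
        f (hammingDist p.1 p.2) =
      ∑ t ∈ Icc u (v + u), ((Fintype.card α).choose t * t.choose u * u.choose (v + u - t)) •
        f (2 * t - (v + u)) := by
  rw [← sum_prod_filter_card_eq_apply_card_symmDiff]
  refine sum_equiv ((boolFunEquivFinset α).prodCongr (boolFunEquivFinset α)) ?_ ?_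
  · simp [card_boolFunEquivFinset]
  · intro p _
    rw [hammingDist_eq_card_symmDiff]
    rfl

end

theorem sum_offdiag_CPF_pairs_eq_degeneracy_sum_general (m v u : ℕ) (h : ℕ → ℝ) :
    (∑ p ∈ (Finset.univ : Finset ((Fin m → Bool) × (Fin m → Bool))).filter
        (fun p => patWeight p.1 = v ∧ patWeight p.2 = u),
      h (hammingDist p.1 p.2)) =
      ∑ t ∈ Finset.Icc u (v + u),
        (Nat.choose m t * Nat.choose t u * Nat.choose u ((v + u) - t) : ℝ) *
          h (2 * t - (v + u)) := by
  rw [sum_filter_patWeight_eq_apply_hammingDist, Fintype.card_fin]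
  simp only [nsmul_eq_mul, Nat.cast_mul]

/-- Off-diagonal degeneracy collapse between the v-CPF and u-CPF image spaces (v < u):
Σ over pairs of weights v, u of h(d(i,i')) equals
Σ_{t=u}^{v+u} C(m,t)·C(t,u)·C(u,(v+u)−t)·h(2t−(v+u)). -/
theorem sum_offdiag_CPF_pairs_eq_degeneracy_sum (m v u : ℕ)
    (hvu : v < u) (hum : u ≤ m) (h : ℕ → ℝ) :
    (∑ p ∈ (Finset.univ : Finset ((Fin m → Bool) × (Fin m → Bool))).filter
        (fun p => patWeight p.1 = v ∧ patWeight p.2 = u),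
      h (hammingDist p.1 p.2)) =
      ∑ t ∈ Finset.Icc u (v + u),
        (Nat.choose m t * Nat.choose t u * Nat.choose u ((v + u) - t) : ℝ) *
          h (2 * t - (v + u)) :=
  sum_offdiag_CPF_pairs_eq_degeneracy_sum_general m v u h
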